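/- Let n ≥ 1, let α₁, …, αₙ ∈ ℝ, and let f : ℝ → ℝ be bounded and uniformly continuous. If Δ_{α₁}⋯Δ_{αₙ} f = 0, then there exist continuous functions f₁, …, fₙ : ℝ → ℝ with fⱼ αⱼ-periodic for each j (such functions are automatically bounded and uniformly continuous) and f = f₁ + ⋯ + fₙ. -/

import Mathlib

/-- The difference operator `Δ_α f (x) = f (x + α) - f x`. -/
def deltaOp (α : ℝ) (f : ℝ → ℝ) : ℝ → ℝ := fun x => f (x + α) - f x

/-! Fix a Banach limit `Λ`, a linear functional on sequences that on bounded sequences is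
shift-invariant, sends constants to themselves and is bounded by the sup norm. For `a : ℝ`
the orbit mean `M_a f x := Λ (k ↦ f (x + k a))` is `a`-periodic and uniformly continuous when
`f` is bounded and uniformly continuous, commutes with translations and hence with every
`Δ_b`, and fixes `a`-periodic functions. If `Δ_{α₁} F = 0` for `F := Δ_{α₂} ⋯ Δ_{αₙ} f`,
then `F` is `α₁`-periodic, so `Δ_{α₂} ⋯ Δ_{αₙ} (f - M_{α₁} f) = F - M_{α₁} F = 0`, and
induction on `n` applies to `f - M_{α₁} f`. -/

open Filter Finset Topology BoundedContinuousFunction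

lemma deltaOp_sub (b : ℝ) (f g : ℝ → ℝ) : deltaOp b (f - g) = deltaOp b f - deltaOp b g := by
  ext x; simp only [deltaOp, Pi.sub_apply]; ring

lemma foldr_deltaOp_sub (l : List ℝ) (f g : ℝ → ℝ) :
    l.foldr deltaOp (f - g) = l.foldr deltaOp f - l.foldr deltaOp g := by
  induction l with
  | nil => rfl
  | cons b l ih => simp only [List.foldr_cons, ih, deltaOp_sub]

lemma deltaOp_eq_zero_iff {b : ℝ} {f : ℝ → ℝ} : deltaOp b f = 0 ↔ Function.Periodic f b := by
  simp [funext_iff, deltaOp, sub_eq_zero, Function.Periodic]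

noncomputable def cesaroMean (a : ℕ → ℝ) (N : ℕ) : ℝ := (N : ℝ)⁻¹ * ∑ k ∈ range N, a k

noncomputable def cesaroLimsup (a : ℕ → ℝ) : ℝ := limsup (cesaroMean a) atTop

lemma cesaroMean_add (a b : ℕ → ℝ) : cesaroMean (a + b) = cesaroMean a + cesaroMean b := by
  ext N; simp [cesaroMean, sum_add_distrib, mul_add]

lemma cesaroMean_smul (c : ℝ) (a : ℕ → ℝ) : cesaroMean (c • a) = c • cesaroMean a := by
  ext N; simp [cesaroMean, ← mul_sum]; ring

lemma cesaroMean_neg (a : ℕ → ℝ) : cesaroMean (-a) = -cesaroMean a := by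
  ext N; simp [cesaroMean]

section Cesaro

variable {a b : ℕ → ℝ} {C D : ℝ}

lemma abs_cesaroMean_le (ha : ∀ k, |a k| ≤ C) (N : ℕ) : |cesaroMean a N| ≤ C := by
  have hC : 0 ≤ C := (abs_nonneg _).trans (ha 0)
  calc |cesaroMean a N| ≤ (N : ℝ)⁻¹ * ∑ k ∈ range N, |a k| := by
        rw [cesaroMean, abs_mul, abs_of_nonneg (by positivity)]
        gcongr
        exact abs_sum_le_sum_abs _ _
    _ ≤ (N : ℝ)⁻¹ * (N * C) := by
        gcongr
        simpa using sum_le_sum fun k (_ : k ∈ range N) => ha k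
    _ ≤ C := by
        rcases N.eq_zero_or_pos with rfl | hN
        · simpa using hC
        · rw [inv_mul_cancel_left₀ (by positivity)]

lemma isBoundedUnder_le_cesaroMean (ha : ∀ k, |a k| ≤ C) :
    IsBoundedUnder (· ≤ ·) atTop (cesaroMean a) :=
  isBoundedUnder_of ⟨C, fun N => (abs_le.1 (abs_cesaroMean_le ha N)).2⟩

lemma isBoundedUnder_ge_cesaroMean (ha : ∀ k, |a k| ≤ C) :
    IsBoundedUnder (· ≥ ·) atTop (cesaroMean a) :=
  isBoundedUnder_of ⟨-C, fun N => (abs_le.1 (abs_cesaroMean_le ha N)).1⟩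

lemma cesaroLimsup_le (ha : ∀ k, |a k| ≤ C) : cesaroLimsup a ≤ C :=
  limsup_le_of_le (isBoundedUnder_ge_cesaroMean ha).isCoboundedUnder_le
    (Eventually.of_forall fun N => (abs_le.1 (abs_cesaroMean_le ha N)).2)

lemma cesaroLimsup_add_le (ha : ∀ k, |a k| ≤ C) (hb : ∀ k, |b k| ≤ D) :
    cesaroLimsup (a + b) ≤ cesaroLimsup a + cesaroLimsup b := by
  rw [cesaroLimsup, cesaroMean_add]
  exact limsup_add_le (isBoundedUnder_ge_cesaroMean ha) (isBoundedUnder_le_cesaroMean ha)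
    (isBoundedUnder_ge_cesaroMean hb).isCoboundedUnder_le (isBoundedUnder_le_cesaroMean hb)

lemma cesaroLimsup_smul {c : ℝ} (hc : 0 ≤ c) (ha : ∀ k, |a k| ≤ C) :
    cesaroLimsup (c • a) = c * cesaroLimsup a := by
  rw [cesaroLimsup, cesaroLimsup, cesaroMean_smul]
  exact ((monotone_mul_left_of_nonneg hc).map_limsup_of_continuousAt _
    (continuous_const_mul c).continuousAt (isBoundedUnder_le_cesaroMean ha)
    (isBoundedUnder_ge_cesaroMean ha).isCoboundedUnder_le).symm

end Cesaro

theorem exists_banachLimit : ∃ Λ : (ℕ → ℝ) →ₗ[ℝ] ℝ,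
    ∀ (a : ℕ → ℝ) (C : ℝ), (∀ k, |a k| ≤ C) → Λ a ≤ cesaroLimsup a := by
  have hbound (b : ℕ →ᵇ ℝ) : ∀ k, |b k| ≤ ‖b‖ := b.norm_coe_le_norm
  obtain ⟨L, -, hL⟩ := exists_extension_of_le_sublinear (⊥ : (ℕ →ᵇ ℝ) →ₗ.[ℝ] ℝ)
    (fun b => cesaroLimsup b) (fun c hc b => cesaroLimsup_smul hc.le (hbound b))
    (fun b b' => cesaroLimsup_add_le (hbound b) (hbound b'))
    (fun b => by
      have hb : (b : ℕ →ᵇ ℝ) = 0 := (Submodule.mem_bot ℝ).1 b.2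
      have h0 : cesaroMean 0 = fun _ => 0 := by ext N; simp [cesaroMean]
      show (0 : ℝ) ≤ _
      simp [hb, cesaroLimsup, h0])
  let coe : (ℕ →ᵇ ℝ) →ₗ[ℝ] ℕ → ℝ :=
    ContinuousMap.coeFnLinearMap ℝ ∘ₗ BoundedContinuousFunction.toContinuousMapLinearMap ℕ ℝ ℝ
  obtain ⟨g, hg⟩ := coe.exists_leftInverse_of_injective
    (LinearMap.ker_eq_bot.2 fun _ _ h => DFunLike.coe_injective h)
  refine ⟨L ∘ₗ g, fun a C ha => ?_⟩
  let b := BoundedContinuousFunction.ofNormedAddCommGroupDiscrete a C ha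
  have hgb : g a = b := LinearMap.congr_fun hg b
  show L (g a) ≤ _
  rw [hgb]
  exact hL b

/-- Only the values on bounded sequences matter: the Hahn–Banach functional lives on `ℕ →ᵇ ℝ`
and is made linear on all of `ℕ → ℝ` through a linear left inverse of the coercion. -/
noncomputable def banachLimit : (ℕ → ℝ) →ₗ[ℝ] ℝ := exists_banachLimit.choose

section BanachLimit

variable {a : ℕ → ℝ} {C : ℝ}

lemma banachLimit_le (ha : ∀ k, |a k| ≤ C) : banachLimit a ≤ cesaroLimsup a :=
  exists_banachLimit.choose_spec a C ha

lemma abs_banachLimit_le (ha : ∀ k, |a k| ≤ C) : |banachLimit a| ≤ C := by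
  have hneg : ∀ k, |(-a) k| ≤ C := by simpa using ha
  have h₁ := (banachLimit_le ha).trans (cesaroLimsup_le ha)
  have h₂ := (banachLimit_le hneg).trans (cesaroLimsup_le hneg)
  rw [map_neg] at h₂
  exact abs_le.2 ⟨by linarith, h₁⟩

lemma banachLimit_eq_of_tendsto {ℓ : ℝ} (ha : ∀ k, |a k| ≤ C)
    (h : Tendsto (cesaroMean a) atTop (𝓝 ℓ)) : banachLimit a = ℓ := by
  have hneg : ∀ k, |(-a) k| ≤ C := by simpa using ha
  have h₁ := (banachLimit_le ha).trans_eq h.limsup_eq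
  have h₂ := (banachLimit_le hneg).trans_eq
    (by rw [cesaroMean_neg]; exact h.neg : Tendsto (cesaroMean (-a)) atTop (𝓝 (-ℓ))).limsup_eq
  rw [map_neg] at h₂
  linarith

lemma banachLimit_const (c : ℝ) : banachLimit (fun _ => c) = c :=
  banachLimit_eq_of_tendsto (C := |c|) (fun _ => le_rfl) tendsto_const_nhds.cesaro

lemma banachLimit_shift (ha : ∀ k, |a k| ≤ C) :
    banachLimit (fun k => a (k + 1)) = banachLimit a := by
  have hsub (i j : ℕ) : |a i - a j| ≤ 2 * C := by
    linarith [abs_sub (a i) (a j), ha i, ha j]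
  have htel : cesaroMean (fun k => a (k + 1) - a k) = fun N : ℕ => (N : ℝ)⁻¹ * (a N - a 0) := by
    ext N; rw [cesaroMean, sum_range_sub a]
  have hlim : Tendsto (cesaroMean (fun k => a (k + 1) - a k)) atTop (𝓝 0) := by
    rw [htel]
    exact (tendsto_inv_atTop_zero.comp tendsto_natCast_atTop_atTop).zero_mul_isBoundedUnder_le
      (isBoundedUnder_of ⟨2 * C, fun N => hsub N 0⟩)
  rw [← sub_eq_zero, ← map_sub]
  exact banachLimit_eq_of_tendsto (fun k => hsub (k + 1) k) hlim

end BanachLimit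

noncomputable def orbitMean (a : ℝ) : (ℝ → ℝ) →ₗ[ℝ] ℝ → ℝ :=
  LinearMap.pi fun x => banachLimit ∘ₗ LinearMap.funLeft ℝ ℝ fun k : ℕ => x + k * a

section OrbitMean

variable {a : ℝ} {f : ℝ → ℝ} {C : ℝ}

lemma orbitMean_apply (a : ℝ) (f : ℝ → ℝ) (x : ℝ) :
    orbitMean a f x = banachLimit fun k : ℕ => f (x + k * a) := rfl

lemma orbitMean_comp_add_right (a b : ℝ) (f : ℝ → ℝ) (x : ℝ) :
    orbitMean a (fun y => f (y + b)) x = orbitMean a f (x + b) := by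
  simp only [orbitMean_apply, add_right_comm x]

lemma orbitMean_deltaOp (a b : ℝ) (f : ℝ → ℝ) :
    orbitMean a (deltaOp b f) = deltaOp b (orbitMean a f) := by
  have : deltaOp b f = (fun y => f (y + b)) - f := rfl
  ext x
  rw [this, map_sub, Pi.sub_apply, orbitMean_comp_add_right]
  rfl

lemma orbitMean_foldr_deltaOp (a : ℝ) (l : List ℝ) (f : ℝ → ℝ) :
    orbitMean a (l.foldr deltaOp f) = l.foldr deltaOp (orbitMean a f) := by
  induction l with
  | nil => rfl
  | cons b l ih => simp only [List.foldr_cons, orbitMean_deltaOp, ih]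

lemma orbitMean_of_periodic (hf : Function.Periodic f a) : orbitMean a f = f := by
  ext x
  have horbit (k : ℕ) : f (x + k * a) = f x := hf.nat_mul k x
  simp only [orbitMean_apply, horbit, banachLimit_const]

lemma periodic_orbitMean (hf : ∀ x, |f x| ≤ C) : Function.Periodic (orbitMean a f) a := by
  intro x
  rw [orbitMean_apply, orbitMean_apply,
    ← banachLimit_shift (a := fun k : ℕ => f (x + k * a)) fun _ => hf _]
  congr with k
  congr 1
  push_cast
  ring

lemma abs_orbitMean_le (hf : ∀ x, |f x| ≤ C) (x : ℝ) : |orbitMean a f x| ≤ C :=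
  abs_banachLimit_le fun _ => hf _

lemma uniformContinuous_orbitMean (hf : UniformContinuous f) :
    UniformContinuous (orbitMean a f) := by
  rw [Metric.uniformContinuous_iff] at hf ⊢
  intro ε hε
  obtain ⟨δ, hδ, hfδ⟩ := hf (ε / 2) (half_pos hε)
  refine ⟨δ, hδ, fun {x y} hxy => ?_⟩
  have hdist : ∀ k : ℕ, |f (x + k * a) - f (y + k * a)| ≤ ε / 2 := fun _ =>
    (hfδ (by simpa [Real.dist_eq] using hxy)).le
  rw [Real.dist_eq, orbitMean_apply, orbitMean_apply, ← map_sub]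
  exact (abs_banachLimit_le hdist).trans_lt (half_lt_self hε)

end OrbitMean

lemma foldr_deltaOp_sub_orbitMean {a : ℝ} {f : ℝ → ℝ} {l : List ℝ}
    (h : deltaOp a (l.foldr deltaOp f) = 0) : l.foldr deltaOp (f - orbitMean a f) = 0 := by
  rw [foldr_deltaOp_sub, ← orbitMean_foldr_deltaOp,
    orbitMean_of_periodic (deltaOp_eq_zero_iff.1 h), sub_self]

theorem stmt_3_general (n : ℕ) (α : Fin n → ℝ) (f : ℝ → ℝ)
    (hbdd : ∃ C : ℝ, ∀ x, |f x| ≤ C) (hunif : UniformContinuous f)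
    (hdiff : (List.ofFn α).foldr deltaOp f = 0) :
    ∃ g : Fin n → ℝ → ℝ, (∀ j, Continuous (g j)) ∧ (∀ j x, g j (x + α j) = g j x) ∧
      ∀ x, f x = ∑ j, g j x := by
  induction n generalizing f with
  | zero =>
    refine ⟨Fin.elim0, fun j => j.elim0, fun j => j.elim0, fun x => ?_⟩
    simpa using congrFun hdiff x
  | succ n ih =>
    obtain ⟨C, hC⟩ := hbdd
    rw [List.ofFn_succ, List.foldr_cons] at hdiff
    have hmean_uc := uniformContinuous_orbitMean (a := α 0) hunif
    have hrem_bdd (x : ℝ) : |f x - orbitMean (α 0) f x| ≤ 2 * C := by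
      linarith [abs_sub (f x) (orbitMean (α 0) f x), hC x, abs_orbitMean_le (a := α 0) hC x]
    obtain ⟨g, hg_cont, hg_per, hg_sum⟩ := ih (Fin.tail α) (f - orbitMean (α 0) f)
      ⟨2 * C, hrem_bdd⟩ (hunif.sub hmean_uc) (foldr_deltaOp_sub_orbitMean hdiff)
    refine ⟨Fin.cons (orbitMean (α 0) f) g, Fin.cases hmean_uc.continuous hg_cont,
      Fin.cases (periodic_orbitMean hC) hg_per, fun x => ?_⟩
    rw [Fin.sum_univ_succ]
    simp [← hg_sum x]

theorem stmt_3 (n : ℕ) (hn : 1 ≤ n) (α : Fin n → ℝ) (f : ℝ → ℝ)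
    (hbdd : ∃ C : ℝ, ∀ x, |f x| ≤ C) (hunif : UniformContinuous f)
    (hdiff : (List.ofFn α).foldr deltaOp f = 0) :
    ∃ g : Fin n → ℝ → ℝ, (∀ j, Continuous (g j)) ∧ (∀ j x, g j (x + α j) = g j x) ∧
      ∀ x, f x = ∑ j, g j x :=
  stmt_3_general n α f hbdd hunif hdiff
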